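/- arXiv:2305.13255 — 3 statements merged into one kernel-verified Lean document; each statement's English description precedes it below -/
import Mathlib

section
/- Let m be a positive integer, p > 0 with m > p + 1, let f: ℝ → ℝ satisfy hypothesis H(m) with x ↦ x·f(x) absolutely integrable, and let θ ∈ {e,o}. Then the functions x ↦ φ_p^θ(x,ρ) converge uniformly on ℝ to the identically zero function as ρ → 0⁺; and for every integer k with 0 < k < m - p - 1 the functions x ↦ ∂^k φ_p^θ/∂x^k (x,ρ) also converge uniformly on ℝ to zero as ρ → 0⁺. -/
open MeasureTheory Filter

/-- Even kernel `Λ_p^e`. -/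
noncomputable def LamE (p : ℝ) (z : ℝ) : ℝ :=
  (1 / Real.sqrt (2 * Real.pi)) *
    ∑' n : ℕ, (-1 : ℝ) ^ n * (∏ k ∈ Finset.range n, (p + 2 * (k : ℝ) + 1)) *
      z ^ (2 * n) / (Nat.factorial (2 * n) : ℝ)

/-- Odd kernel `Λ_p^o`. -/
noncomputable def LamO (p : ℝ) (z : ℝ) : ℝ :=
  (1 / Real.sqrt (2 * Real.pi)) *
    ∑' n : ℕ, (-1 : ℝ) ^ n * (∏ k ∈ Finset.range (n + 1), (p + 2 * (k : ℝ))) *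
      z ^ (2 * n + 1) / (Nat.factorial (2 * n + 1) : ℝ)

/-- Fourier transform of a real-valued integrable function. -/
noncomputable def FT (g : ℝ → ℝ) (ω : ℝ) : ℂ :=
  ∫ x : ℝ, (g x : ℂ) * Complex.exp (-(Complex.I * ω * x))

/-- Parity index. -/
inductive Theta | e | o

/-- The kernel of parity `θ`. -/
noncomputable def Lam : Theta → ℝ → ℝ → ℝ
  | Theta.e => LamE
  | Theta.o => LamO

/-- The convolution `φ_p^θ(x,ρ)`. -/
noncomputable def phi (f : ℝ → ℝ) (θ : Theta) (p x ρ : ℝ) : ℝ :=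
  ∫ ν : ℝ, f (x - ν) * ρ ^ (p + 1) * Lam θ p (ν * ρ)

/-- The multiplier `M_p^θ(ω)`. -/
noncomputable def Mker (θ : Theta) (c d p : ℝ) (ω : ℝ) : ℂ :=
  match θ with
  | Theta.e => ((c * |ω| ^ p : ℝ) : ℂ)
  | Theta.o => Complex.I * (d : ℂ) * ((Real.sign ω : ℝ) : ℂ) * ((|ω| ^ p : ℝ) : ℂ)

/-- Hypothesis H(m). -/
def HypH (m : ℕ) (f : ℝ → ℝ) : Prop :=
  ContDiff ℝ m f ∧ ∀ i : ℕ, i ≤ m → MeasureTheory.Integrable (iteratedDeriv i f)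

/-- Fourier transform of a complex-valued function. -/
noncomputable def FTc (g : ℝ → ℂ) (ω : ℝ) : ℂ :=
  ∫ x : ℝ, g x * Complex.exp (-(Complex.I * ω * x))

/-- The limit `f_p^θ(x)`. -/
noncomputable def flim (f : ℝ → ℝ) (θ : Theta) (c d p : ℝ) (x : ℝ) : ℝ :=
  (((1 / (2 * Real.pi) : ℝ) : ℂ) *
    ∫ ω : ℝ, FT f ω * Mker θ c d p ω * Complex.exp (Complex.I * ω * x)).re

/-- The scale-space function `Ψ_p^θ(x,σ)`. -/
noncomputable def Psi (f : ℝ → ℝ) (θ : Theta) (c d p : ℝ) (x σ : ℝ) : ℝ :=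
  (((1 / (2 * Real.pi) : ℝ) : ℂ) *
    ∫ ω : ℝ, FT f ω * Mker θ c d p ω * ((Real.exp (-(ω ^ 2 * σ ^ 2) / 2) : ℝ) : ℂ) *
      Complex.exp (Complex.I * ω * x)).re

/-!
Both kernels are transforms of a Gaussian-damped power. With the moments
`G(q) = ∫₀^∞ ω^q e^{-ω²/2} dω`, which satisfy `G(q + 2) = (q + 1) G(q)`, integrating the cosine
and sine series termwise against `ω^p e^{-ω²/2}` gives
`Λ_p^e(z) = (2π)^{-1/2} G(p)⁻¹ ∫₀^∞ ω^p e^{-ω²/2} cos(ωz) dω` and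
`Λ_p^o(z) = (2π)^{-1/2} G(p-1)⁻¹ ∫₀^∞ ω^p e^{-ω²/2} sin(ωz) dω`.
Differentiating under the integral, the `k`-th derivative of `z ↦ ρ^{p+1} Λ_p^θ(zρ)` is
bounded by `C ρ^{p+1+k} G(p+k)`. Since `∂^k φ_p^θ(·,ρ)` is the convolution of `f` with it, it
is bounded uniformly in `x` by `C ‖f‖₁ ρ^{p+1+k} G(p+k) → 0`.
-/

open Real Set
open scoped Nat Topology

noncomputable def gaussMoment (q : ℝ) : ℝ := ∫ ω in Ioi 0, ω ^ q * exp (-(1 / 2) * ω ^ 2)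

noncomputable def gaussCosTransform (q c z : ℝ) : ℝ :=
  ∫ ω in Ioi 0, ω ^ q * exp (-(1 / 2) * ω ^ 2) * cos (ω * z + c)

lemma integrableOn_gaussWeight {q : ℝ} (hq : -1 < q) :
    IntegrableOn (fun ω : ℝ => ω ^ q * exp (-(1 / 2) * ω ^ 2)) (Ioi 0) :=
  integrableOn_rpow_mul_exp_neg_mul_sq (by norm_num) hq

lemma gaussMoment_eq_Gamma {q : ℝ} (hq : -1 < q) :
    gaussMoment q = 2 ^ ((q - 1) / 2) * Gamma ((q + 1) / 2) := by
  have h := integral_rpow_mul_exp_neg_mul_rpow two_pos hq (by norm_num : (0 : ℝ) < 1 / 2)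
  simp only [rpow_two] at h
  rw [gaussMoment, h, one_div (2 : ℝ), inv_rpow zero_le_two, ← rpow_neg zero_le_two,
    show (q - 1) / 2 = -(-(q + 1) / 2) - 1 by ring, rpow_sub_one two_ne_zero]
  ring

lemma gaussMoment_pos {q : ℝ} (hq : -1 < q) : 0 < gaussMoment q := by
  rw [gaussMoment_eq_Gamma hq]
  exact mul_pos (rpow_pos_of_pos two_pos _) (Gamma_pos_of_pos (by linarith))

lemma gaussMoment_add_two {q : ℝ} (hq : -1 < q) :
    gaussMoment (q + 2) = (q + 1) * gaussMoment q := by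
  rw [gaussMoment_eq_Gamma hq, gaussMoment_eq_Gamma (by linarith),
    show (q + 2 + 1) / 2 = (q + 1) / 2 + 1 by ring, Gamma_add_one (by linarith),
    show (q + 2 - 1) / 2 = (q - 1) / 2 + 1 by ring, rpow_add two_pos, rpow_one]
  ring

lemma gaussMoment_add_two_mul {q : ℝ} (hq : -1 < q) (n : ℕ) :
    gaussMoment (q + 2 * n) = (∏ k ∈ Finset.range n, (q + 2 * k + 1)) * gaussMoment q := by
  induction n with
  | zero => simp
  | succ n ih =>
    have hqn : -1 < q + 2 * n := by linarith [n.cast_nonneg (α := ℝ)]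
    rw [Nat.cast_succ, show q + 2 * (n + 1 : ℝ) = q + 2 * n + 2 by ring,
      gaussMoment_add_two hqn, ih, Finset.prod_range_succ]
    ring

lemma integrableOn_gaussWeight_mul_exp {q : ℝ} (hq : -1 < q) (r : ℝ) :
    IntegrableOn (fun ω : ℝ => ω ^ q * exp (-(1 / 2) * ω ^ 2) * exp (r * ω)) (Ioi 0) := by
  refine Integrable.mono' ((integrableOn_rpow_mul_exp_neg_mul_sq (by norm_num : (0 : ℝ) < 1 / 4)
    hq).const_mul (exp (r ^ 2))) (by fun_prop) ?_
  filter_upwards [ae_restrict_mem measurableSet_Ioi] with ω hω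
  have hωq : 0 ≤ ω ^ q := rpow_nonneg hω.out.le q
  rw [norm_of_nonneg (by positivity), mul_assoc, ← exp_add, mul_left_comm, ← exp_add]
  exact mul_le_mul_of_nonneg_left (exp_le_exp.2 (by nlinarith [sq_nonneg (ω / 2 - r)])) hωq

lemma hasSum_integral_gaussWeight_mul {q : ℝ} (hq : -1 < q) {a : ℕ → ℝ} {d : ℕ → ℕ}
    {g G : ℝ → ℝ} (hG : Measurable G)
    (hg_sum : ∀ x, HasSum (fun n => a n * x ^ d n) (g x))
    (hG_sum : ∀ x, HasSum (fun n => |a n| * x ^ d n) (G x))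
    (hG_le : ∀ x, 0 ≤ x → G x ≤ exp x) (z : ℝ) :
    HasSum (fun n => a n * z ^ d n * gaussMoment (q + d n))
      (∫ ω in Ioi 0, ω ^ q * exp (-(1 / 2) * ω ^ 2) * g (ω * z)) := by
  have hterm : ∀ n, ∫ ω in Ioi 0, ω ^ q * exp (-(1 / 2) * ω ^ 2) * (a n * (ω * z) ^ d n) =
      a n * z ^ d n * gaussMoment (q + d n) := fun n => by
    rw [gaussMoment, ← integral_const_mul]
    refine setIntegral_congr_fun measurableSet_Ioi fun ω hω => ?_
    rw [rpow_add hω, rpow_natCast, mul_pow]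
    ring
  simp_rw [← hterm]
  -- Dominated convergence; the majorant `ω^q e^{-ω²/2} G(ω|z|)` is at most `ω^q e^{-ω²/2 + |z|ω}`.
  refine hasSum_integral_of_dominated_convergence
    (fun n ω => ω ^ q * exp (-(1 / 2) * ω ^ 2) * (|a n| * (ω * |z|) ^ d n))
    (fun n => by fun_prop) (fun n => ?_) (ae_of_all _ fun ω => ((hG_sum _).summable.mul_left _))
    ?_ (ae_of_all _ fun ω => (hg_sum _).mul_left _)
  · filter_upwards [ae_restrict_mem measurableSet_Ioi] with ω hω
    have hωq : 0 ≤ ω ^ q := rpow_nonneg hω.out.le q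
    rw [norm_mul, norm_of_nonneg (by positivity), norm_mul, norm_pow, norm_mul,
      norm_of_nonneg hω.out.le]
    rfl
  · simp_rw [tsum_mul_left, (hG_sum _).tsum_eq]
    refine Integrable.mono' (integrableOn_gaussWeight_mul_exp hq |z|) (by fun_prop) ?_
    filter_upwards [ae_restrict_mem measurableSet_Ioi] with ω hω
    have hω0 : 0 ≤ ω := hω.out.le
    have hωq : 0 ≤ ω ^ q := rpow_nonneg hω0 q
    have hG0 : 0 ≤ G (ω * |z|) := (hG_sum _).nonneg fun n => by positivity
    rw [norm_of_nonneg (by positivity), mul_comm |z|]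
    exact mul_le_mul_of_nonneg_left (hG_le _ (by positivity)) (by positivity)

lemma hasSum_gaussCosTransform_zero {q : ℝ} (hq : -1 < q) (z : ℝ) :
    HasSum (fun n : ℕ => (-1) ^ n / (2 * n)! * z ^ (2 * n) * gaussMoment (q + (2 * n : ℕ)))
      (gaussCosTransform q 0 z) := by
  simpa only [gaussCosTransform, add_zero] using
    hasSum_integral_gaussWeight_mul hq measurable_cosh
      (fun x => by simpa only [mul_div_right_comm] using hasSum_cos x)
      (fun x => by simpa [abs_div, div_eq_inv_mul] using hasSum_cosh x)
      (fun x _ => by rw [cosh_eq]; linarith [exp_le_exp.2 (neg_le_self ‹0 ≤ x›)]) z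

lemma hasSum_gaussCosTransform_neg_pi_div_two {q : ℝ} (hq : -1 < q) (z : ℝ) :
    HasSum (fun n : ℕ => (-1) ^ n / (2 * n + 1)! * z ^ (2 * n + 1) *
        gaussMoment (q + (2 * n + 1 : ℕ))) (gaussCosTransform q (-(π / 2)) z) := by
  simpa only [gaussCosTransform, ← sub_eq_add_neg, cos_sub_pi_div_two] using
    hasSum_integral_gaussWeight_mul hq measurable_sinh
      (fun x => by simpa only [mul_div_right_comm] using hasSum_sin x)
      (fun x => by simpa [abs_div, div_eq_inv_mul] using hasSum_sinh x)
      (fun x _ => by rw [sinh_eq]; linarith [exp_pos x, exp_pos (-x)]) z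

lemma lamE_eq_gaussCosTransform {p : ℝ} (hp : -1 < p) (z : ℝ) :
    LamE p z = 1 / √(2 * π) / gaussMoment p * gaussCosTransform p 0 z := by
  rw [LamE, (((hasSum_gaussCosTransform_zero hp z).div_const (gaussMoment p)).congr_fun
    fun n => ?_).tsum_eq]
  · ring
  · rw [Nat.cast_mul, Nat.cast_two, gaussMoment_add_two_mul hp]
    field_simp [(gaussMoment_pos hp).ne']

lemma lamO_eq_gaussCosTransform {p : ℝ} (hp : 0 < p) (z : ℝ) :
    LamO p z = 1 / √(2 * π) / gaussMoment (p - 1) * gaussCosTransform p (-(π / 2)) z := by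
  rw [LamO, (((hasSum_gaussCosTransform_neg_pi_div_two (by linarith) z).div_const
    (gaussMoment (p - 1))).congr_fun fun n => ?_).tsum_eq]
  · ring
  · have hodd := gaussMoment_add_two_mul (q := p - 1) (by linarith) (n + 1)
    simp only [Nat.cast_succ, show ∀ k : ℝ, p - 1 + 2 * k + 1 = p + 2 * k from fun k => by ring]
      at hodd
    rw [show p + ((2 * n + 1 : ℕ) : ℝ) = p - 1 + 2 * (n + 1) by push_cast; ring, hodd]
    field_simp [(gaussMoment_pos (q := p - 1) (by linarith)).ne']

lemma integrableOn_gaussCosTransform_integrand {q : ℝ} (hq : -1 < q) (c z : ℝ) :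
    IntegrableOn (fun ω : ℝ => ω ^ q * exp (-(1 / 2) * ω ^ 2) * cos (ω * z + c)) (Ioi 0) :=
  (integrableOn_gaussWeight hq).mul_bdd (by fun_prop)
    (ae_of_all _ fun ω => (Real.norm_eq_abs _).trans_le (abs_cos_le_one _))

lemma abs_gaussCosTransform_le {q : ℝ} (hq : -1 < q) (c z : ℝ) :
    |gaussCosTransform q c z| ≤ gaussMoment q := by
  rw [← Real.norm_eq_abs, gaussCosTransform]
  refine norm_integral_le_of_norm_le (integrableOn_gaussWeight hq) ?_
  filter_upwards [ae_restrict_mem measurableSet_Ioi] with ω hω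
  have hωq : 0 ≤ ω ^ q := rpow_nonneg hω.out.le q
  rw [norm_mul, norm_of_nonneg (by positivity)]
  exact mul_le_of_le_one_right (by positivity) (abs_cos_le_one _)

lemma hasDerivAt_gaussCosTransform {q : ℝ} (hq : -1 < q) (c z : ℝ) :
    HasDerivAt (gaussCosTransform q c) (gaussCosTransform (q + 1) (c + π / 2) z) z := by
  have hq' : -1 < q + 1 := by linarith
  refine (hasDerivAt_integral_of_dominated_loc_of_deriv_le (x₀ := z) univ_mem
    (F := fun z ω => ω ^ q * exp (-(1 / 2) * ω ^ 2) * cos (ω * z + c))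
    (F' := fun z ω => ω ^ (q + 1) * exp (-(1 / 2) * ω ^ 2) * cos (ω * z + (c + π / 2)))
    (Eventually.of_forall fun z => (integrableOn_gaussCosTransform_integrand hq c z).1)
    (integrableOn_gaussCosTransform_integrand hq c z)
    (integrableOn_gaussCosTransform_integrand hq' _ z).1 ?_ (integrableOn_gaussWeight hq') ?_).2
  · filter_upwards [ae_restrict_mem measurableSet_Ioi] with ω hω z _
    have hωq : 0 ≤ ω ^ (q + 1) := rpow_nonneg hω.out.le _
    rw [norm_mul, norm_of_nonneg (by positivity)]
    exact mul_le_of_le_one_right (by positivity) (abs_cos_le_one _)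
  · filter_upwards [ae_restrict_mem measurableSet_Ioi] with ω hω z _
    have h := (((hasDerivAt_id z).const_mul ω).add_const c).cos.const_mul
      (ω ^ q * exp (-(1 / 2) * ω ^ 2))
    refine h.congr_deriv ?_
    rw [id, mul_one, ← add_assoc, cos_add_pi_div_two, rpow_add_one hω.out.ne']
    ring

section Convolution

variable {f : ℝ → ℝ}

lemma integrable_mul_comp_sub (hf : Integrable f) {K : ℝ → ℝ} (hK : Continuous K) {C : ℝ}
    (hC : ∀ z, |K z| ≤ C) (y : ℝ) : Integrable (fun t => f t * K (y - t)) :=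
  hf.mul_bdd (by fun_prop) (ae_of_all _ fun t => hC (y - t))

lemma abs_integral_mul_comp_sub_le (hf : Integrable f) {K : ℝ → ℝ} {C : ℝ}
    (hC : ∀ z, |K z| ≤ C) (y : ℝ) : |∫ t, f t * K (y - t)| ≤ (∫ t, |f t|) * C := by
  rw [← Real.norm_eq_abs, ← integral_mul_const]
  refine norm_integral_le_of_norm_le (hf.abs.mul_const C) (ae_of_all _ fun t => ?_)
  rw [norm_mul, Real.norm_eq_abs]
  exact mul_le_mul_of_nonneg_left (hC _) (abs_nonneg _)

lemma hasDerivAt_integral_mul_comp_sub (hf : Integrable f) {K K' : ℝ → ℝ}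
    (hK : ∀ z, HasDerivAt K (K' z) z) {C C' : ℝ} (hC : ∀ z, |K z| ≤ C) (hK' : Continuous K')
    (hC' : ∀ z, |K' z| ≤ C') (y : ℝ) :
    HasDerivAt (fun y => ∫ t, f t * K (y - t)) (∫ t, f t * K' (y - t)) y := by
  have hKc : Continuous K := continuous_iff_continuousAt.2 fun z => (hK z).continuousAt
  refine (hasDerivAt_integral_of_dominated_loc_of_deriv_le (x₀ := y) univ_mem
    (F := fun y t => f t * K (y - t)) (F' := fun y t => f t * K' (y - t))
    (bound := fun t => |f t| * C')
    (Eventually.of_forall fun y => (integrable_mul_comp_sub hf hKc hC y).1)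
    (integrable_mul_comp_sub hf hKc hC y) (integrable_mul_comp_sub hf hK' hC' y).1
    (ae_of_all _ fun t y _ => ?_) (hf.abs.mul_const C')
    (ae_of_all _ fun t y _ => ?_)).2
  · rw [norm_mul, Real.norm_eq_abs]
    exact mul_le_mul_of_nonneg_left (hC' _) (abs_nonneg _)
  · simpa using ((hK (y - t)).comp y ((hasDerivAt_id y).sub_const t)).const_mul (f t)

lemma iteratedDeriv_integral_mul_comp_sub (hf : Integrable f) {K : ℕ → ℝ → ℝ}
    (hK : ∀ k z, HasDerivAt (K k) (K (k + 1) z) z) (hC : ∀ k, ∃ C, ∀ z, |K k z| ≤ C)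
    (k : ℕ) :
    iteratedDeriv k (fun y => ∫ t, f t * K 0 (y - t)) = fun y => ∫ t, f t * K k (y - t) := by
  induction k with
  | zero => simp
  | succ k ih =>
    obtain ⟨C, hCk⟩ := hC k
    obtain ⟨C', hCk'⟩ := hC (k + 1)
    have hK' : Continuous (K (k + 1)) :=
      continuous_iff_continuousAt.2 fun z => (hK (k + 1) z).continuousAt
    funext y
    rw [iteratedDeriv_succ, ih]
    exact (hasDerivAt_integral_mul_comp_sub hf (hK k) hCk hK' hCk' y).deriv

end Convolution

noncomputable def Theta.phase : Theta → ℝ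
  | Theta.e => 0
  | Theta.o => -(π / 2)

noncomputable def Theta.kernelConst (p : ℝ) : Theta → ℝ
  | Theta.e => 1 / √(2 * π) / gaussMoment p
  | Theta.o => 1 / √(2 * π) / gaussMoment (p - 1)

lemma lam_eq_kernelConst_mul {p : ℝ} (hp : 0 < p) (θ : Theta) (z : ℝ) :
    Lam θ p z = θ.kernelConst p * gaussCosTransform p θ.phase z := by
  cases θ
  · exact lamE_eq_gaussCosTransform (by linarith) z
  · exact lamO_eq_gaussCosTransform hp z

/-- The `k`-th derivative of `z ↦ ρ ^ (p + 1) * Lam θ p (z * ρ)`. -/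
noncomputable def scaledKernelDeriv (θ : Theta) (p ρ : ℝ) (k : ℕ) (z : ℝ) : ℝ :=
  ρ ^ (p + 1) * ρ ^ k * θ.kernelConst p *
    gaussCosTransform (p + k) (θ.phase + k * (π / 2)) (z * ρ)

lemma hasDerivAt_scaledKernelDeriv {p : ℝ} (hp : -1 < p) (θ : Theta) (ρ : ℝ) (k : ℕ)
    (z : ℝ) :
    HasDerivAt (scaledKernelDeriv θ p ρ k) (scaledKernelDeriv θ p ρ (k + 1) z) z := by
  have hpk : -1 < p + k := by linarith [k.cast_nonneg (α := ℝ)]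
  have h := ((hasDerivAt_gaussCosTransform hpk (θ.phase + k * (π / 2)) (z * ρ)).comp z
    ((hasDerivAt_id z).mul_const ρ)).const_mul (ρ ^ (p + 1) * ρ ^ k * θ.kernelConst p)
  refine h.congr_deriv ?_
  rw [scaledKernelDeriv, Nat.cast_succ, ← add_assoc, add_one_mul (k : ℝ), ← add_assoc,
    pow_succ, one_mul]
  ring

lemma abs_scaledKernelDeriv_le {p : ℝ} (hp : -1 < p) (θ : Theta) (ρ : ℝ) (k : ℕ) (z : ℝ) :
    |scaledKernelDeriv θ p ρ k z| ≤
      |ρ ^ (p + 1) * ρ ^ k * θ.kernelConst p| * gaussMoment (p + k) := by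
  rw [scaledKernelDeriv, abs_mul]
  exact mul_le_mul_of_nonneg_left
    (abs_gaussCosTransform_le (by linarith [k.cast_nonneg (α := ℝ)]) _ _) (abs_nonneg _)

lemma phi_eq_integral_scaledKernelDeriv {p : ℝ} (hp : 0 < p) (f : ℝ → ℝ) (θ : Theta)
    (y ρ : ℝ) : phi f θ p y ρ = ∫ t, f t * scaledKernelDeriv θ p ρ 0 (y - t) := by
  rw [← integral_sub_left_eq_self _ volume y, phi]
  congr 1 with ν
  simp only [scaledKernelDeriv, sub_sub_cancel, lam_eq_kernelConst_mul hp, Nat.cast_zero,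
    add_zero, zero_mul, pow_zero]
  ring

section Phi

variable {f : ℝ → ℝ} {p : ℝ}

lemma iteratedDeriv_phi (hp : 0 < p) (hf : Integrable f) (θ : Theta) (k : ℕ) (ρ : ℝ) :
    iteratedDeriv k (fun y => phi f θ p y ρ) =
      fun y => ∫ t, f t * scaledKernelDeriv θ p ρ k (y - t) := by
  simp_rw [phi_eq_integral_scaledKernelDeriv hp]
  exact iteratedDeriv_integral_mul_comp_sub hf
    (hasDerivAt_scaledKernelDeriv (by linarith) θ ρ)
    (fun k => ⟨_, abs_scaledKernelDeriv_le (by linarith) θ ρ k⟩) k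

lemma abs_iteratedDeriv_phi_le (hp : 0 < p) (hf : Integrable f) (θ : Theta) (k : ℕ)
    (ρ x : ℝ) : |iteratedDeriv k (fun y => phi f θ p y ρ) x| ≤
      (∫ t, |f t|) * (|ρ ^ (p + 1) * ρ ^ k * θ.kernelConst p| * gaussMoment (p + k)) := by
  rw [iteratedDeriv_phi hp hf]
  exact abs_integral_mul_comp_sub_le hf (abs_scaledKernelDeriv_le (by linarith) θ ρ k) x

end Phi

lemma tendstoUniformly_zero_of_abs_le {ι α : Type*} {l : Filter ι} {F : ι → α → ℝ}
    {b : ι → ℝ} (hb : Tendsto b l (𝓝 0)) (hF : ∀ i x, |F i x| ≤ b i) :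
    TendstoUniformly F (fun _ => 0) l := by
  rw [Metric.tendstoUniformly_iff]
  intro ε hε
  filter_upwards [hb.eventually (gt_mem_nhds hε)] with i hi x
  rw [dist_zero_left, Real.norm_eq_abs]
  exact (hF i x).trans_lt hi

theorem stmt10_general (m : ℕ) (p : ℝ) (hp : 0 < p)
    (f : ℝ → ℝ) (hf : HypH m f) (θ : Theta) :
    TendstoUniformly (fun ρ : ℝ => fun x : ℝ => phi f θ p x ρ)
      (fun _ => 0) (nhdsWithin 0 (Set.Ioi (0 : ℝ))) ∧
    ∀ k : ℕ, 0 < k → (k : ℝ) < (m : ℝ) - p - 1 →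
      TendstoUniformly
        (fun ρ : ℝ => fun x : ℝ => iteratedDeriv k (fun y => phi f θ p y ρ) x)
        (fun _ => 0) (nhdsWithin 0 (Set.Ioi (0 : ℝ))) := by
  have hfi : Integrable f := by simpa using hf.2 0 m.zero_le
  have hderiv : ∀ k : ℕ, TendstoUniformly
      (fun ρ : ℝ => fun x : ℝ => iteratedDeriv k (fun y => phi f θ p y ρ) x)
      (fun _ => 0) (nhdsWithin 0 (Set.Ioi (0 : ℝ))) := fun k => by
    refine tendstoUniformly_zero_of_abs_le ?_ (abs_iteratedDeriv_phi_le hp hfi θ k)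
    have hcont : ContinuousAt (fun ρ : ℝ =>
        (∫ t, |f t|) * (|ρ ^ (p + 1) * ρ ^ k * θ.kernelConst p| * gaussMoment (p + k))) 0 := by
      have hrpow := continuousAt_rpow_const 0 (p + 1) (Or.inr (by linarith))
      fun_prop
    simpa [zero_rpow (by linarith : p + 1 ≠ 0)] using hcont.tendsto.mono_left nhdsWithin_le_nhds
  exact ⟨by simpa using hderiv 0, fun k _ _ => hderiv k⟩

/-- Theorem 2.4: uniform convergence of `φ_p^θ(·,ρ)` and its `x`-derivatives to zero
as `ρ → 0⁺`. -/
theorem stmt10 (m : ℕ) (hm : 0 < m) (p : ℝ) (hp : 0 < p) (hmp : p + 1 < (m : ℝ))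
    (f : ℝ → ℝ) (hf : HypH m f)
    (hxf : MeasureTheory.Integrable (fun x : ℝ => x * f x)) (θ : Theta) :
    TendstoUniformly (fun ρ : ℝ => fun x : ℝ => phi f θ p x ρ)
      (fun _ => 0) (nhdsWithin 0 (Set.Ioi (0 : ℝ))) ∧
    ∀ k : ℕ, 0 < k → (k : ℝ) < (m : ℝ) - p - 1 →
      TendstoUniformly
        (fun ρ : ℝ => fun x : ℝ => iteratedDeriv k (fun y => phi f θ p y ρ) x)
        (fun _ => 0) (nhdsWithin 0 (Set.Ioi (0 : ℝ))) :=
  stmt10_general m p hp f hf θ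
end

section
/- Let Ψ: ℝ² → ℝ be three times continuously differentiable and satisfy the equation ∂Ψ/∂σ (x,σ) = σ · ∂²Ψ/∂x² (x,σ) for all (x,σ) ∈ ℝ². Define L(x,σ) = Ψ(x,σ) - x·∂Ψ/∂x(x,σ), and let z: (a,b) → ℝ², z(t) = (x(t), σ(t)), be a differentiable curve satisfying x'(t) = -∂²Ψ/∂x∂σ (z(t)) and σ'(t) = ∂²Ψ/∂x² (z(t)) for all t. Then d/dt [L(z(t))] = σ(t) · (∂²Ψ/∂x² (z(t)))² for all t; consequently t ↦ L(z(t)) is non-decreasing on any subinterval where σ(t) ≥ 0 and non-increasing on any subinterval where σ(t) ≤ 0. -/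
open MeasureTheory Filter

/-!
Write `G = ∂Ψ/∂x`. The trajectory equations say `z' = (-∂G/∂σ, ∂G/∂x)`, a vector field orthogonal
to `∇G`, so `G` is a first integral: `d/dt G(z(t)) = 0`. Hence
`d/dt L(z(t)) = d/dt Ψ(z(t)) - x'(t) G(z(t)) = σ'(t) ∂Ψ/∂σ(z(t))`, and the heat equation
`∂Ψ/∂σ = σ ∂²Ψ/∂x²` together with `σ' = ∂²Ψ/∂x²` turns this into `σ (∂²Ψ/∂x²)²`.
Monotonicity then follows from the sign of the derivative.
-/

open Function

section PartialDerivatives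

variable {f : ℝ → ℝ → ℝ} {φ : ℝ × ℝ →L[ℝ] ℝ}

theorem ContinuousLinearMap.apply_prod_eq (φ : ℝ × ℝ →L[ℝ] ℝ) (u v : ℝ) :
    φ (u, v) = u * φ (1, 0) + v * φ (0, 1) := by
  have h : ((u, v) : ℝ × ℝ) = u • ((1 : ℝ), (0 : ℝ)) + v • ((0 : ℝ), (1 : ℝ)) := by simp
  rw [h, map_add, map_smul, map_smul, smul_eq_mul, smul_eq_mul]

theorem HasFDerivAt.hasDerivAt_uncurry_comp {x σ : ℝ → ℝ} {x' σ' t : ℝ}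
    (hf : HasFDerivAt (uncurry f) φ (x t, σ t)) (hx : HasDerivAt x x' t)
    (hσ : HasDerivAt σ σ' t) :
    HasDerivAt (fun t => f (x t) (σ t)) (x' * φ (1, 0) + σ' * φ (0, 1)) t := by
  rw [← φ.apply_prod_eq]
  exact hf.comp_hasDerivAt t (hx.prodMk hσ)

theorem HasFDerivAt.deriv_fst_eq {x σ : ℝ} (hf : HasFDerivAt (uncurry f) φ (x, σ)) :
    deriv (fun y => f y σ) x = φ (1, 0) := by
  simpa using (hf.hasDerivAt_uncurry_comp (hasDerivAt_id x) (hasDerivAt_const x σ)).deriv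

theorem HasFDerivAt.deriv_snd_eq {x σ : ℝ} (hf : HasFDerivAt (uncurry f) φ (x, σ)) :
    deriv (fun s => f x s) σ = φ (0, 1) := by
  simpa using (hf.hasDerivAt_uncurry_comp (hasDerivAt_const σ x) (hasDerivAt_id σ)).deriv

theorem DifferentiableAt.hasDerivAt_uncurry_comp {x σ : ℝ → ℝ} {x' σ' t : ℝ}
    (hf : DifferentiableAt ℝ (uncurry f) (x t, σ t)) (hx : HasDerivAt x x' t)
    (hσ : HasDerivAt σ σ' t) :
    HasDerivAt (fun t => f (x t) (σ t))
      (x' * deriv (fun y => f y (σ t)) (x t) + σ' * deriv (fun s => f (x t) s) (σ t)) t := by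
  rw [hf.hasFDerivAt.deriv_fst_eq, hf.hasFDerivAt.deriv_snd_eq]
  exact hf.hasFDerivAt.hasDerivAt_uncurry_comp hx hσ

theorem ContDiff.uncurry_deriv_fst {m n : WithTop ℕ∞} (hf : ContDiff ℝ n (uncurry f))
    (hmn : m + 1 ≤ n) : ContDiff ℝ m (uncurry fun x σ => deriv (fun y => f y σ) x) := by
  have hdiff := hf.differentiable (ne_of_gt (lt_of_lt_of_le (by simp) hmn))
  have heq : (uncurry fun x σ => deriv (fun y => f y σ) x) =
      fun p => fderiv ℝ (uncurry f) p (1, 0) :=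
    funext fun p => (hdiff p).hasFDerivAt.deriv_fst_eq
  rw [heq]
  exact (hf.fderiv_right hmn).clm_apply contDiff_const

end PartialDerivatives

theorem hasDerivAt_zero_along_hamiltonian_flow {g : ℝ → ℝ → ℝ} {x σ : ℝ → ℝ} {t : ℝ}
    (hg : DifferentiableAt ℝ (uncurry g) (x t, σ t))
    (hx : HasDerivAt x (-deriv (fun s => g (x t) s) (σ t)) t)
    (hσ : HasDerivAt σ (deriv (fun y => g y (σ t)) (x t)) t) :
    HasDerivAt (fun t => g (x t) (σ t)) 0 t := by
  convert hg.hasDerivAt_uncurry_comp hx hσ using 1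
  ring

theorem hasDerivAt_energy_of_heat {Ψ : ℝ → ℝ → ℝ} (hΨ : ContDiff ℝ 2 (uncurry Ψ))
    {x σ : ℝ → ℝ} {t : ℝ}
    (heat : deriv (fun s => Ψ (x t) s) (σ t) =
      σ t * iteratedDeriv 2 (fun y => Ψ y (σ t)) (x t))
    (hx : HasDerivAt x (-deriv (fun s => deriv (fun y => Ψ y s) (x t)) (σ t)) t)
    (hσ : HasDerivAt σ (iteratedDeriv 2 (fun y => Ψ y (σ t)) (x t)) t) :
    HasDerivAt (fun t => Ψ (x t) (σ t) - x t * deriv (fun y => Ψ y (σ t)) (x t))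
      (σ t * iteratedDeriv 2 (fun y => Ψ y (σ t)) (x t) ^ 2) t := by
  rw [iteratedDeriv_succ, iteratedDeriv_one] at heat hσ ⊢
  have hG : DifferentiableAt ℝ (uncurry fun x σ => deriv (fun y => Ψ y σ) x) (x t, σ t) :=
    (hΨ.uncurry_deriv_fst (m := 1) (by norm_num)).differentiable one_ne_zero _
  have hΨz := (hΨ.differentiable (by simp) _).hasDerivAt_uncurry_comp hx hσ
  have hGz := hasDerivAt_zero_along_hamiltonian_flow hG hx hσ
  refine (hΨz.sub (hx.mul hGz)).congr_deriv ?_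
  rw [heat]
  ring

theorem le_of_hasDerivAt_nonneg {f f' : ℝ → ℝ} {t₁ t₂ : ℝ} (h : t₁ ≤ t₂)
    (hf : ∀ t ∈ Set.Icc t₁ t₂, HasDerivAt f (f' t) t) (hf' : ∀ t ∈ Set.Icc t₁ t₂, 0 ≤ f' t) :
    f t₁ ≤ f t₂ := by
  refine monotoneOn_of_hasDerivWithinAt_nonneg (convex_Icc t₁ t₂)
    (fun t ht => (hf t ht).continuousAt.continuousWithinAt)
    (fun t ht => (hf t (interior_subset ht)).hasDerivWithinAt)
    (fun t ht => hf' t (interior_subset ht)) ⟨le_rfl, h⟩ ⟨h, le_rfl⟩ h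

/-- Lemma 3.2: the energy function `L = Ψ - x·Ψ_x` is monotone along trajectories of the
vector field `(-Ψ_xσ, Ψ_xx)`. -/
theorem stmt17 (Ψ : ℝ → ℝ → ℝ)
    (hΨ : ContDiff ℝ 3 (fun q : ℝ × ℝ => Ψ q.1 q.2))
    (heat : ∀ x σ : ℝ, deriv (fun s => Ψ x s) σ = σ * iteratedDeriv 2 (fun y => Ψ y σ) x)
    (L : ℝ → ℝ → ℝ) (hL : ∀ x σ : ℝ, L x σ = Ψ x σ - x * deriv (fun y => Ψ y σ) x)
    (a b : ℝ) (z : ℝ → ℝ × ℝ)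
    (hz : ∀ t ∈ Set.Ioo a b,
      HasDerivAt (fun t => (z t).1)
        (-(deriv (fun s => deriv (fun y => Ψ y s) (z t).1) (z t).2)) t ∧
      HasDerivAt (fun t => (z t).2)
        (iteratedDeriv 2 (fun y => Ψ y (z t).2) (z t).1) t) :
    (∀ t ∈ Set.Ioo a b,
      HasDerivAt (fun t => L (z t).1 (z t).2)
        ((z t).2 * (iteratedDeriv 2 (fun y => Ψ y (z t).2) (z t).1) ^ 2) t) ∧
    (∀ t₁ ∈ Set.Ioo a b, ∀ t₂ ∈ Set.Ioo a b, t₁ ≤ t₂ →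
      (∀ t ∈ Set.Icc t₁ t₂, 0 ≤ (z t).2) → L (z t₁).1 (z t₁).2 ≤ L (z t₂).1 (z t₂).2) ∧
    (∀ t₁ ∈ Set.Ioo a b, ∀ t₂ ∈ Set.Ioo a b, t₁ ≤ t₂ →
      (∀ t ∈ Set.Icc t₁ t₂, (z t).2 ≤ 0) → L (z t₂).1 (z t₂).2 ≤ L (z t₁).1 (z t₁).2) := by
  have hΨ2 : ContDiff ℝ 2 (uncurry Ψ) := hΨ.of_le (by norm_num)
  have hderiv : ∀ t ∈ Set.Ioo a b,
      HasDerivAt (fun t => L (z t).1 (z t).2)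
        ((z t).2 * (iteratedDeriv 2 (fun y => Ψ y (z t).2) (z t).1) ^ 2) t := by
    intro t ht
    simp only [hL]
    exact hasDerivAt_energy_of_heat hΨ2 (heat _ _) (hz t ht).1 (hz t ht).2
  refine ⟨hderiv, ?_, ?_⟩
  · intro t₁ ht₁ t₂ ht₂ h12 hσ
    exact le_of_hasDerivAt_nonneg (f := fun t => L (z t).1 (z t).2) h12
      (fun t ht => hderiv t (Set.Icc_subset_Ioo ht₁.1 ht₂.2 ht))
      fun t ht => mul_nonneg (hσ t ht) (sq_nonneg _)
  · intro t₁ ht₁ t₂ ht₂ h12 hσ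
    exact neg_le_neg_iff.mp <| le_of_hasDerivAt_nonneg (f := fun t => -L (z t).1 (z t).2) h12
      (fun t ht => (hderiv t (Set.Icc_subset_Ioo ht₁.1 ht₂.2 ht)).neg)
      fun t ht => neg_nonneg.mpr (mul_nonpos_of_nonpos_of_nonneg (hσ t ht) (sq_nonneg _))
end

section
/- Let l ≥ 1 and m be positive integers, p > 0 with m > p + 1 + 2l, let f: ℝ → ℝ satisfy hypothesis H(m) with x ↦ x·f(x) absolutely integrable, and let θ ∈ {e,o}. Then for all integers k, n ≥ 0 with 2n + k ≤ 2l, the mixed partial derivative ∂^{k+n}Ψ_p^θ/∂x^k∂σ^n is uniformly bounded on the plane: there exists D > 0 such that |∂^{k+n}Ψ_p^θ/∂x^k∂σ^n (x,σ)| ≤ D for all (x,σ) ∈ ℝ². -/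
/-!
Differentiating under the integral sign, `∂ₓᵏ ∂σⁿ Ψ` is the real part of
`∫ A(ω) (iω)ᵏ e^{iωx} ωⁿ g⁽ⁿ⁾(ωσ) dω`, where `g(t) = e^{-t²/2}` and `A = (2π)⁻¹ 𝓕f · M_p^θ`.
Every derivative of `g` is a Hermite polynomial times `g`, hence bounded, so this integral is
bounded by a constant times `∫ |A(ω)| |ω|^{k+n} dω`, uniformly in `(x, σ)`. Under `H(m)` both
`𝓕f` and `ωᵐ 𝓕f` are bounded, so `|𝓕f(ω)| ≲ (1 + |ω|)⁻ᵐ`; with `|M_p^θ(ω)| ≲ |ω|ᵖ` this makes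
`|A(ω)| |ω|ʲ` integrable as soon as `p + j + 1 < m`, i.e. for every `j ≤ 2l`. Since
`k + n ≤ 2n + k ≤ 2l`, this both justifies each differentiation and bounds the result.
-/

open MeasureTheory Filter

lemma iteratedDeriv_eq_of_hasDerivAt {E : Type*} [NormedAddCommGroup E] [NormedSpace ℝ E]
    {k : ℕ} {u : ℕ → ℝ → E} (hu : ∀ j < k, ∀ t, HasDerivAt (u j) (u (j + 1) t) t) :
    iteratedDeriv k (u 0) = u k := by
  induction k generalizing u with
  | zero => simp
  | succ k ih =>
    rw [iteratedDeriv_succ', funext fun t => (hu 0 k.succ_pos t).deriv]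
    exact ih fun j hj t => hu (j + 1) (by omega) t

noncomputable def gauss (t : ℝ) : ℝ := Real.exp (-(t ^ 2 / 2))

lemma contDiff_gauss : ContDiff ℝ (⊤ : ℕ∞) gauss :=
  ((contDiff_id.pow 2).div_const 2).neg.exp

lemma hasDerivAt_iteratedDeriv_gauss (n : ℕ) (t : ℝ) :
    HasDerivAt (iteratedDeriv n gauss) (iteratedDeriv (n + 1) gauss t) t := by
  rw [iteratedDeriv_succ]
  exact ((contDiff_gauss.differentiable_iteratedDeriv n
    (by exact_mod_cast ENat.natCast_lt_top n)) t).hasDerivAt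

@[fun_prop]
lemma continuous_iteratedDeriv_gauss (n : ℕ) : Continuous (iteratedDeriv n gauss) :=
  contDiff_gauss.continuous_iteratedDeriv n (by exact_mod_cast le_top)

lemma tendsto_pow_mul_gauss_cocompact (i : ℕ) :
    Tendsto (fun t => t ^ i * gauss t) (cocompact ℝ) (nhds 0) := by
  rw [tendsto_zero_iff_norm_tendsto_zero]
  refine (tendsto_rpow_abs_mul_exp_neg_mul_sq_cocompact one_half_pos i).congr fun t => ?_
  rw [norm_mul, norm_pow, Real.norm_eq_abs, Real.rpow_natCast, gauss, Real.norm_eq_abs,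
    Real.abs_exp]
  ring_nf

open Polynomial in
lemma tendsto_iteratedDeriv_gauss_cocompact (n : ℕ) :
    Tendsto (iteratedDeriv n gauss) (cocompact ℝ) (nhds 0) := by
  have h : iteratedDeriv n gauss = fun t => (-1) ^ n *
      ∑ i ∈ Finset.range ((hermite n).natDegree + 1),
        ((hermite n).coeff i : ℝ) * (t ^ i * gauss t) := by
    funext t
    rw [iteratedDeriv_eq_iterate]
    change deriv^[n] (fun y => Real.exp (-(y ^ 2 / 2))) t = _
    rw [deriv_gaussian_eq_hermite_mul_gaussian, aeval_eq_sum_range, mul_assoc, Finset.sum_mul]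
    simp [mul_assoc, gauss]
  rw [h]
  simpa using (tendsto_finsetSum _ fun i _ => (tendsto_pow_mul_gauss_cocompact i).const_mul
    ((hermite n).coeff i : ℝ)).const_mul ((-1 : ℝ) ^ n)

lemma exists_abs_iteratedDeriv_gauss_le (n : ℕ) : ∃ C, ∀ t, |iteratedDeriv n gauss t| ≤ C := by
  let F : ZeroAtInftyContinuousMap ℝ ℝ :=
    ⟨⟨iteratedDeriv n gauss, continuous_iteratedDeriv_gauss n⟩,
      tendsto_iteratedDeriv_gauss_cocompact n⟩
  exact ⟨‖F.toBCF‖, F.toBCF.norm_coe_le_norm⟩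

lemma HypH.integrable {m : ℕ} {f : ℝ → ℝ} (hf : HypH m f) : Integrable f := by
  simpa using hf.2 0 (Nat.zero_le m)

lemma FT_eq_fourier (g : ℝ → ℝ) (ω : ℝ) :
    FT g ω = FourierTransform.fourier (fun x => (g x : ℂ)) (ω / (2 * Real.pi)) := by
  rw [Real.fourier_eq', FT]
  congr 1 with x
  rw [smul_eq_mul, mul_comm, real_inner_comm, RCLike.inner_apply, conj_trivial]
  congr 2
  push_cast
  field_simp

lemma continuous_FT {g : ℝ → ℝ} (hg : Integrable g) : Continuous (FT g) := by
  simp_rw [funext (FT_eq_fourier g)]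
  exact (VectorFourier.fourierIntegral_continuous Real.continuous_fourierChar
    (innerSL ℝ).continuous₂ hg.ofReal).comp (continuous_id.div_const _)

lemma norm_FT_le (g : ℝ → ℝ) (ω : ℝ) : ‖FT g ω‖ ≤ ∫ x, |g x| := by
  refine (norm_integral_le_integral_norm _).trans_eq (integral_congr_ae (ae_of_all _ fun x => ?_))
  dsimp only
  rw [norm_mul, Complex.norm_real, Complex.norm_exp]
  simp

lemma iteratedDeriv_ofReal_comp {f : ℝ → ℝ} {m : ℕ} (hf : ContDiff ℝ m f) {i : ℕ} (hi : i ≤ m) :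
    iteratedDeriv i (fun x => (f x : ℂ)) = fun x => ((iteratedDeriv i f x : ℝ) : ℂ) := by
  induction i with
  | zero => simp
  | succ i ih =>
    rw [iteratedDeriv_succ, iteratedDeriv_succ, ih (by omega)]
    funext x
    exact ((hf.differentiable_iteratedDeriv i (by exact_mod_cast hi)) x).hasDerivAt
      |>.ofReal_comp.deriv

lemma HypH.FT_iteratedDeriv {m : ℕ} {f : ℝ → ℝ} (hf : HypH m f) (ω : ℝ) :
    FT (iteratedDeriv m f) ω = (Complex.I * ω) ^ m * FT f ω := by
  obtain ⟨hfC, hfI⟩ := hf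
  have hfC' : ContDiff ℝ m fun x => (f x : ℂ) := Complex.ofRealCLM.contDiff.comp hfC
  have hint : ∀ i : ℕ, (i : ℕ∞) ≤ m → Integrable (iteratedDeriv i fun x => (f x : ℂ)) := by
    intro i hi
    rw [iteratedDeriv_ofReal_comp hfC (by exact_mod_cast hi)]
    exact (hfI i (by exact_mod_cast hi)).ofReal
  rw [FT_eq_fourier, ← iteratedDeriv_ofReal_comp hfC le_rfl,
    Real.fourier_iteratedDeriv (N := m) hfC' hint le_rfl, FT_eq_fourier]
  dsimp only
  rw [smul_eq_mul]
  congr 1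
  push_cast
  field_simp

lemma HypH.norm_FT_mul_one_add_abs_pow_le {m : ℕ} {f : ℝ → ℝ} (hf : HypH m f) (ω : ℝ) :
    ‖FT f ω‖ * (1 + |ω|) ^ m ≤ 2 ^ m * ((∫ x, |f x|) + ∫ x, |iteratedDeriv m f x|) := by
  have h0 : ‖FT f ω‖ ≤ ∫ x, |f x| := norm_FT_le f ω
  have hm : |ω| ^ m * ‖FT f ω‖ ≤ ∫ x, |iteratedDeriv m f x| := by
    simpa [hf.FT_iteratedDeriv, norm_mul, norm_pow] using norm_FT_le (iteratedDeriv m f) ω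
  have hpow : (1 + |ω|) ^ m ≤ 2 ^ m * (1 + |ω| ^ m) := by
    calc (1 + |ω|) ^ m ≤ 2 ^ (m - 1) * (1 ^ m + |ω| ^ m) := add_pow_le zero_le_one (abs_nonneg ω) m
      _ ≤ 2 ^ m * (1 + |ω| ^ m) := by
        rw [one_pow]
        gcongr
        · norm_num
        · omega
  calc ‖FT f ω‖ * (1 + |ω|) ^ m ≤ ‖FT f ω‖ * (2 ^ m * (1 + |ω| ^ m)) := by gcongr
    _ = 2 ^ m * (‖FT f ω‖ + |ω| ^ m * ‖FT f ω‖) := by ring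
    _ ≤ _ := by gcongr

lemma integrable_norm_mul_abs_rpow_of_decay {E : Type*} [NormedAddCommGroup E] {F : ℝ → E}
    (hF : AEStronglyMeasurable F) {m : ℕ} {s C : ℝ} (hs : 0 ≤ s) (hsm : s + 1 < m)
    (hdecay : ∀ ω, ‖F ω‖ * (1 + |ω|) ^ m ≤ C) :
    Integrable fun ω => ‖F ω‖ * |ω| ^ s := by
  have hg : Integrable fun ω : ℝ => C * (1 + ‖ω‖) ^ (-((m : ℝ) - s)) :=
    (integrable_one_add_norm (by simp; linarith)).const_mul C
  refine hg.mono' (hF.norm.mul (continuous_abs.rpow_const fun _ => Or.inr hs).aestronglyMeasurable)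
    (ae_of_all _ fun ω => ?_)
  have h1 : 0 < 1 + |ω| := by positivity
  rw [Real.norm_eq_abs, abs_of_nonneg (by positivity), Real.norm_eq_abs]
  calc ‖F ω‖ * |ω| ^ s ≤ ‖F ω‖ * (1 + |ω|) ^ s := by gcongr; linarith
    _ = ‖F ω‖ * (1 + |ω|) ^ m * (1 + |ω|) ^ (-((m : ℝ) - s)) := by
        rw [mul_assoc, ← Real.rpow_natCast, ← Real.rpow_add h1]; ring_nf
    _ ≤ C * (1 + |ω|) ^ (-((m : ℝ) - s)) := by gcongr; exact hdecay ω

lemma norm_Mker_le (θ : Theta) (c d p ω : ℝ) : ‖Mker θ c d p ω‖ ≤ max |c| |d| * |ω| ^ p := by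
  have hp : 0 ≤ |ω| ^ p := by positivity
  cases θ with
  | e =>
    simpa [Mker, abs_mul, abs_of_nonneg hp] using
      mul_le_mul_of_nonneg_right (le_max_left |c| |d|) hp
  | o =>
    have hsign : |Real.sign ω| ≤ 1 := by
      rcases Real.sign_apply_eq ω with h | h | h <;> simp [h]
    simp only [Mker, norm_mul, Complex.norm_I, Complex.norm_real, Real.norm_eq_abs, one_mul,
      abs_of_nonneg hp]
    calc |d| * |Real.sign ω| * |ω| ^ p ≤ |d| * 1 * |ω| ^ p := by gcongr
      _ ≤ max |c| |d| * |ω| ^ p := by rw [mul_one]; gcongr; exact le_max_right _ _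

@[fun_prop]
lemma Real.measurable_sign : Measurable Real.sign :=
  Measurable.ite (measurableSet_lt measurable_id measurable_const) measurable_const
    (Measurable.ite (measurableSet_lt measurable_const measurable_id) measurable_const
      measurable_const)

lemma measurable_Mker (θ : Theta) (c d p : ℝ) : Measurable (Mker θ c d p) := by
  cases θ <;> unfold Mker <;> dsimp only <;> fun_prop

noncomputable def psiAmplitude (f : ℝ → ℝ) (θ : Theta) (c d p ω : ℝ) : ℂ :=
  ((1 / (2 * Real.pi) : ℝ) : ℂ) * (FT f ω * Mker θ c d p ω)

lemma aestronglyMeasurable_psiAmplitude {f : ℝ → ℝ} (hf : Integrable f) (θ : Theta) (c d p : ℝ) :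
    AEStronglyMeasurable (psiAmplitude f θ c d p) :=
  aestronglyMeasurable_const.mul ((continuous_FT hf).aestronglyMeasurable.mul
    (measurable_Mker θ c d p).aestronglyMeasurable)

lemma HypH.integrable_norm_psiAmplitude_mul_abs_pow {m : ℕ} {f : ℝ → ℝ} (hf : HypH m f)
    (θ : Theta) (c d : ℝ) {p : ℝ} (hp : 0 < p) {j : ℕ} (hj : p + 1 + j < m) :
    Integrable fun ω => ‖psiAmplitude f θ c d p ω‖ * |ω| ^ j := by
  have hFT : Integrable fun ω => ‖FT f ω‖ * |ω| ^ (p + j) :=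
    integrable_norm_mul_abs_rpow_of_decay (continuous_FT hf.integrable).aestronglyMeasurable
      (by positivity) (by linarith) hf.norm_FT_mul_one_add_abs_pow_le
  refine (hFT.const_mul ((2 * Real.pi)⁻¹ * max |c| |d|)).mono'
    ((aestronglyMeasurable_psiAmplitude hf.integrable θ c d p).norm.mul
      (continuous_abs.pow j).aestronglyMeasurable) (ae_of_all _ fun ω => ?_)
  rw [Real.norm_eq_abs, abs_of_nonneg (by positivity), psiAmplitude, norm_mul, norm_mul,
    Complex.norm_real, Real.norm_eq_abs, abs_of_pos (by positivity),
    Real.rpow_add' (abs_nonneg ω) (by positivity), Real.rpow_natCast]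
  calc 1 / (2 * Real.pi) * (‖FT f ω‖ * ‖Mker θ c d p ω‖) * |ω| ^ j
      ≤ 1 / (2 * Real.pi) * (‖FT f ω‖ * (max |c| |d| * |ω| ^ p)) * |ω| ^ j := by
        gcongr; exact norm_Mker_le θ c d p ω
    _ = _ := by ring

section ScaleIntegral

variable (A : ℝ → ℂ)

/-- `∂ₓᵏ ∂σⁿ` of `A ω e^{iωx} gauss (ωσ)`. -/
noncomputable def scaleIntegrand (k n : ℕ) (x σ ω : ℝ) : ℂ :=
  A ω * ((Complex.I * ω) ^ k * Complex.exp (Complex.I * ω * x) * (ω : ℂ) ^ n *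
    ((iteratedDeriv n gauss (ω * σ) : ℝ) : ℂ))

noncomputable def scaleIntegral (k n : ℕ) (x σ : ℝ) : ℂ := ∫ ω, scaleIntegrand A k n x σ ω

variable {A}

lemma aestronglyMeasurable_scaleIntegrand (hA : AEStronglyMeasurable A) (k n : ℕ) (x σ : ℝ) :
    AEStronglyMeasurable (scaleIntegrand A k n x σ) :=
  hA.mul (Continuous.aestronglyMeasurable (by fun_prop))

lemma norm_scaleIntegrand_le {k n : ℕ} {C : ℝ} (hC : ∀ t, |iteratedDeriv n gauss t| ≤ C)
    (x σ ω : ℝ) : ‖scaleIntegrand A k n x σ ω‖ ≤ ‖A ω‖ * |ω| ^ (k + n) * C := by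
  have hexp : ‖Complex.exp (Complex.I * ω * x)‖ = 1 := by simp [Complex.norm_exp]
  simp only [scaleIntegrand, norm_mul, norm_pow, Complex.norm_I, Complex.norm_real,
    Real.norm_eq_abs, hexp, one_mul, mul_one, pow_add]
  calc ‖A ω‖ * (|ω| ^ k * |ω| ^ n * |iteratedDeriv n gauss (ω * σ)|)
      ≤ ‖A ω‖ * (|ω| ^ k * |ω| ^ n * C) := by gcongr; exact hC _
    _ = ‖A ω‖ * (|ω| ^ k * |ω| ^ n) * C := by ring

lemma integrable_scaleIntegrand (hA : AEStronglyMeasurable A) {k n : ℕ}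
    (hW : Integrable fun ω => ‖A ω‖ * |ω| ^ (k + n)) (x σ : ℝ) :
    Integrable (scaleIntegrand A k n x σ) := by
  obtain ⟨C, hC⟩ := exists_abs_iteratedDeriv_gauss_le n
  exact (hW.mul_const C).mono' (aestronglyMeasurable_scaleIntegrand hA k n x σ)
    (ae_of_all _ (norm_scaleIntegrand_le hC x σ))

lemma hasDerivAt_scaleIntegrand_x (k n : ℕ) (x σ ω : ℝ) :
    HasDerivAt (fun y => scaleIntegrand A k n y σ ω) (scaleIntegrand A (k + 1) n x σ ω) x := by
  have hexp : HasDerivAt (fun y : ℝ => Complex.exp (Complex.I * ω * y))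
      (Complex.exp (Complex.I * ω * x) * (Complex.I * ω)) x := by
    simpa using (((hasDerivAt_id (x : ℂ)).const_mul (Complex.I * ω)).cexp).comp_ofReal
  refine ((((hexp.const_mul ((Complex.I * ω) ^ k)).mul_const ((ω : ℂ) ^ n)).mul_const
    ((iteratedDeriv n gauss (ω * σ) : ℝ) : ℂ)).const_mul (A ω)).congr_deriv ?_
  simp only [scaleIntegrand]
  ring

lemma hasDerivAt_scaleIntegrand_σ (k n : ℕ) (x σ ω : ℝ) :
    HasDerivAt (fun s => scaleIntegrand A k n x s ω) (scaleIntegrand A k (n + 1) x σ ω) σ := by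
  have hg : HasDerivAt (fun s => ((iteratedDeriv n gauss (ω * s) : ℝ) : ℂ))
      ((iteratedDeriv (n + 1) gauss (ω * σ) * ω : ℝ) : ℂ) σ :=
    ((hasDerivAt_iteratedDeriv_gauss n (ω * σ)).comp σ
      ((hasDerivAt_id σ).const_mul ω |>.congr_deriv (mul_one ω))).ofReal_comp
  refine ((hg.const_mul ((Complex.I * ω) ^ k * Complex.exp (Complex.I * ω * x) *
    (ω : ℂ) ^ n)).const_mul (A ω)).congr_deriv ?_
  simp only [scaleIntegrand]
  push_cast
  ring

lemma hasDerivAt_scaleIntegral_x (hA : AEStronglyMeasurable A) {k n : ℕ}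
    (hW : Integrable fun ω => ‖A ω‖ * |ω| ^ (k + n))
    (hW' : Integrable fun ω => ‖A ω‖ * |ω| ^ (k + 1 + n)) (x σ : ℝ) :
    HasDerivAt (fun y => scaleIntegral A k n y σ) (scaleIntegral A (k + 1) n x σ) x := by
  obtain ⟨C, hC⟩ := exists_abs_iteratedDeriv_gauss_le n
  exact (hasDerivAt_integral_of_dominated_loc_of_deriv_le
    (F' := fun y ω => scaleIntegrand A (k + 1) n y σ ω) (Metric.ball_mem_nhds x one_pos)
    (Eventually.of_forall fun y => aestronglyMeasurable_scaleIntegrand hA k n y σ)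
    (integrable_scaleIntegrand hA hW x σ) (aestronglyMeasurable_scaleIntegrand hA (k + 1) n x σ)
    (ae_of_all _ fun ω y _ => norm_scaleIntegrand_le hC y σ ω) (hW'.mul_const C)
    (ae_of_all _ fun ω y _ => hasDerivAt_scaleIntegrand_x k n y σ ω)).2

lemma hasDerivAt_scaleIntegral_σ (hA : AEStronglyMeasurable A) {k n : ℕ}
    (hW : Integrable fun ω => ‖A ω‖ * |ω| ^ (k + n))
    (hW' : Integrable fun ω => ‖A ω‖ * |ω| ^ (k + (n + 1))) (x σ : ℝ) :
    HasDerivAt (fun s => scaleIntegral A k n x s) (scaleIntegral A k (n + 1) x σ) σ := by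
  obtain ⟨C, hC⟩ := exists_abs_iteratedDeriv_gauss_le (n + 1)
  exact (hasDerivAt_integral_of_dominated_loc_of_deriv_le (Metric.ball_mem_nhds σ one_pos)
    (Eventually.of_forall fun s => aestronglyMeasurable_scaleIntegrand hA k n x s)
    (integrable_scaleIntegrand hA hW x σ) (aestronglyMeasurable_scaleIntegrand hA k (n + 1) x σ)
    (ae_of_all _ fun ω s _ => norm_scaleIntegrand_le hC x s ω) (hW'.mul_const C)
    (ae_of_all _ fun ω s _ => hasDerivAt_scaleIntegrand_σ k n x s ω)).2

lemma iteratedDeriv_re_scaleIntegral (hA : AEStronglyMeasurable A) {k n : ℕ}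
    (hW : ∀ j ≤ k + n, Integrable fun ω => ‖A ω‖ * |ω| ^ j) (x σ : ℝ) :
    iteratedDeriv n (fun s => iteratedDeriv k (fun y => (scaleIntegral A 0 0 y s).re) x) σ =
      (scaleIntegral A k n x σ).re := by
  have hx : ∀ s, iteratedDeriv k (fun y => (scaleIntegral A 0 0 y s).re) =
      fun y => (scaleIntegral A k 0 y s).re := fun s =>
    iteratedDeriv_eq_of_hasDerivAt (u := fun j y => (scaleIntegral A j 0 y s).re) fun j hj t =>
      Complex.reCLM.hasFDerivAt.comp_hasDerivAt t
        (hasDerivAt_scaleIntegral_x hA (hW _ (by omega)) (hW _ (by omega)) t s)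
  simp only [hx]
  exact congrFun (iteratedDeriv_eq_of_hasDerivAt
    (u := fun j s => (scaleIntegral A k j x s).re) fun j hj t =>
      Complex.reCLM.hasFDerivAt.comp_hasDerivAt t
        (hasDerivAt_scaleIntegral_σ hA (hW _ (by omega)) (hW _ (by omega)) x t)) σ

lemma exists_norm_scaleIntegral_le (hA : AEStronglyMeasurable A) {k n : ℕ}
    (hW : Integrable fun ω => ‖A ω‖ * |ω| ^ (k + n)) :
    ∃ D, 0 < D ∧ ∀ x σ, ‖scaleIntegral A k n x σ‖ ≤ D := by
  obtain ⟨C, hC⟩ := exists_abs_iteratedDeriv_gauss_le n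
  have hC0 : 0 ≤ C := (abs_nonneg _).trans (hC 0)
  have hI : 0 ≤ ∫ ω, ‖A ω‖ * |ω| ^ (k + n) * C := integral_nonneg fun ω => by positivity
  refine ⟨(∫ ω, ‖A ω‖ * |ω| ^ (k + n) * C) + 1, by positivity, fun x σ => ?_⟩
  calc ‖scaleIntegral A k n x σ‖ ≤ ∫ ω, ‖scaleIntegrand A k n x σ ω‖ :=
        norm_integral_le_integral_norm _
    _ ≤ ∫ ω, ‖A ω‖ * |ω| ^ (k + n) * C :=
        integral_mono (integrable_scaleIntegrand hA hW x σ).norm (hW.mul_const C)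
          (norm_scaleIntegrand_le hC x σ)
    _ ≤ _ := le_add_of_nonneg_right zero_le_one

end ScaleIntegral

lemma Psi_eq_re_scaleIntegral (f : ℝ → ℝ) (θ : Theta) (c d p x σ : ℝ) :
    Psi f θ c d p x σ = (scaleIntegral (psiAmplitude f θ c d p) 0 0 x σ).re := by
  rw [Psi, scaleIntegral, ← integral_const_mul]
  congr 2 with ω
  simp only [scaleIntegrand, psiAmplitude, iteratedDeriv_zero, gauss, pow_zero, one_mul, mul_one]
  push_cast
  ring_nf

theorem stmt18_general (l m : ℕ) (p : ℝ) (hp : 0 < p)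
    (hmp : p + 1 + 2 * (l : ℝ) < (m : ℝ))
    (f : ℝ → ℝ) (hf : HypH m f)
    (θ : Theta) (c d : ℝ) :
    ∀ k n : ℕ, 2 * n + k ≤ 2 * l →
      ∃ D : ℝ, 0 < D ∧ ∀ x σ : ℝ,
        |iteratedDeriv n (fun s => iteratedDeriv k (fun y => Psi f θ c d p y s) x) σ| ≤ D := by
  intro k n hkn
  have hA := aestronglyMeasurable_psiAmplitude hf.integrable θ c d p
  have hW : ∀ j ≤ k + n, Integrable fun ω => ‖psiAmplitude f θ c d p ω‖ * |ω| ^ j := by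
    intro j hj
    have hjl : (j : ℝ) ≤ 2 * l := by exact_mod_cast (by omega : j ≤ 2 * l)
    exact hf.integrable_norm_psiAmplitude_mul_abs_pow θ c d hp (by linarith)
  obtain ⟨D, hD, hbound⟩ := exists_norm_scaleIntegral_le hA (hW _ le_rfl)
  refine ⟨D, hD, fun x σ => ?_⟩
  simp only [Psi_eq_re_scaleIntegral, iteratedDeriv_re_scaleIntegral hA hW]
  exact (Complex.abs_re_le_norm _).trans (hbound x σ)

/-- Lemma 3.3: the mixed partial derivatives `∂^{k+n}Ψ_p^θ/∂x^k∂σ^n` with `2n + k ≤ 2l`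
are uniformly bounded on the plane. -/
theorem stmt18 (l m : ℕ) (hl : 1 ≤ l) (hm : 0 < m) (p : ℝ) (hp : 0 < p)
    (hmp : p + 1 + 2 * (l : ℝ) < (m : ℝ))
    (f : ℝ → ℝ) (hf : HypH m f)
    (hxf : MeasureTheory.Integrable (fun x : ℝ => x * f x))
    (θ : Theta) (c d : ℝ) (hc : c ≠ 0) (hd : d ≠ 0)
    (hF : ∀ ω : ℝ, FT (Lam θ p) ω =
      Mker θ c d p ω * ((Real.exp (-(ω ^ 2) / 2) : ℝ) : ℂ)) :
    ∀ k n : ℕ, 2 * n + k ≤ 2 * l →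
      ∃ D : ℝ, 0 < D ∧ ∀ x σ : ℝ,
        |iteratedDeriv n (fun s => iteratedDeriv k (fun y => Psi f θ c d p y s) x) σ| ≤ D :=
  stmt18_general l m p hp hmp f hf θ c d
end
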